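/- arXiv:2101.02791 — 8 statements merged into one kernel-verified Lean document; each statement's English description precedes it below -/
import Mathlib

section
/- Let E be a category with finite colimits and Q a class of maps containing the isomorphisms such that the full subcategory of the arrow category spanned by Q is closed under finite colimits. Then Q has the right cancellation property: if u and v∘u belong to Q then v belongs to Q. -/
open CategoryTheory CategoryTheory.Limits

universe v u

namespace Paper

variable {E : Type u} [Category.{v} E]

/-- The full subcategory of the arrow category spanned by `Q` is closed under finite
colimits. -/
def ClosedUnderFiniteColimitsArrow (Q : MorphismProperty E) : Prop :=
  ∀ (J : Type) [SmallCategory J] [FinCategory J] (D : J ⥤ Arrow E) (c : Cocone D),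
    IsColimit c → (∀ j, Q (D.obj j).hom) → Q c.pt.hom

theorem Arrow.isPushout_of_isPushout_left_right {W X Y Z : Arrow E} {f : W ⟶ X} {g : W ⟶ Y}
    {h : X ⟶ Z} {k : Y ⟶ Z} (comm : f ≫ h = g ≫ k)
    (hl : IsPushout f.left g.left h.left k.left)
    (hr : IsPushout f.right g.right h.right k.right) :
    IsPushout f g h k :=
  ⟨⟨comm⟩, ⟨Comma.fstSndJointlyReflectColimit
    ((isColimitMapCoconePushoutCoconeEquiv _ comm).symm hl.isColimit)
    ((isColimitMapCoconePushoutCoconeEquiv _ comm).symm hr.isColimit)⟩⟩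

/-- Componentwise this square is `A = A, u, u, B = B` on sources and `B, B = B, C = C, v` on
targets, two pushouts along identities. -/
theorem Arrow.isPushout_comp_id {A B C : E} (u : A ⟶ B) (v : B ⟶ C) :
    IsPushout (Arrow.homMk (𝟙 A) v (by simp) : Arrow.mk u ⟶ Arrow.mk (u ≫ v))
      (Arrow.homMk u (𝟙 B) (by simp) : Arrow.mk u ⟶ Arrow.mk (𝟙 B))
      (Arrow.homMk u (𝟙 C) (by simp) : Arrow.mk (u ≫ v) ⟶ Arrow.mk v)
      (Arrow.homMk (𝟙 B) v (by simp) : Arrow.mk (𝟙 B) ⟶ Arrow.mk v) :=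
  Arrow.isPushout_of_isPushout_left_right (by ext <;> simp)
    (IsPushout.id_horiz u) (IsPushout.id_vert v)

theorem ClosedUnderFiniteColimitsArrow.of_isPushout {Q : MorphismProperty E}
    (hQ : ClosedUnderFiniteColimitsArrow Q) {W X Y Z : Arrow E} {f : W ⟶ X} {g : W ⟶ Y}
    {h : X ⟶ Z} {k : Y ⟶ Z} (sq : IsPushout f g h k) (hW : Q W.hom) (hX : Q X.hom)
    (hY : Q Y.hom) : Q Z.hom :=
  hQ WalkingSpan (span f g) _ sq.isColimit (by rintro (_ | _ | _) <;> assumption)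

theorem right_cancellation_of_closedUnderFiniteColimits_general
    (Q : MorphismProperty E)
    (hiso : ∀ ⦃X Y : E⦄ (f : X ⟶ Y), IsIso f → Q f)
    (hQ : ClosedUnderFiniteColimitsArrow Q) :
    ∀ ⦃A B C : E⦄ (u : A ⟶ B) (v : B ⟶ C), Q u → Q (u ≫ v) → Q v :=
  fun _ B _ u v hu huv =>
    hQ.of_isPushout (Arrow.isPushout_comp_id u v) hu huv (hiso (𝟙 B) inferInstance)

theorem right_cancellation_of_closedUnderFiniteColimits [HasFiniteColimits E]
    (Q : MorphismProperty E)
    (hiso : ∀ ⦃X Y : E⦄ (f : X ⟶ Y), IsIso f → Q f)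
    (hQ : ClosedUnderFiniteColimitsArrow Q) :
    ∀ ⦃A B C : E⦄ (u : A ⟶ B) (v : B ⟶ C), Q u → Q (u ≫ v) → Q v :=
  right_cancellation_of_closedUnderFiniteColimits_general Q hiso hQ

end Paper
end

section
/- Let E be a category with finite limits and φ : E → E' ⊆ E a left-exact reflector onto a reflective full subcategory. Then the class L_φ of maps inverted by φ is the left class of a factorization system (L_φ, R_φ), where a map f : X → Y belongs to R_φ if and only if the naturality square formed by the unit maps η(X) : X → φ(X), η(Y) : Y → φ(Y), f, and φ(f) is cartesian. -/
open CategoryTheory CategoryTheory.Limits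

universe w v u

namespace Paper

variable {E : Type u} [Category.{v} E]

/-- `u` is left orthogonal to `f`: every commutative square from `u` to `f` admits a
unique diagonal filler. -/
def Orth {A B X Y : E} (u : A ⟶ B) (f : X ⟶ Y) : Prop :=
  ∀ (x : A ⟶ X) (y : B ⟶ Y), x ≫ f = u ≫ y → ∃! d : B ⟶ X, u ≫ d = x ∧ d ≫ f = y

/-- A factorization system `(L, R)`: two replete classes of maps with `L` orthogonal to
`R`, such that every map factors as a map in `L` followed by a map in `R`. -/
structure FactorizationSystem (E : Type u) [Category.{v} E] where
  /-- the left class -/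
  L : MorphismProperty E
  /-- the right class -/
  R : MorphismProperty E
  replete_L : ∀ ⦃X Y X' Y' : E⦄ (f : X ⟶ Y) (f' : X' ⟶ Y'),
    (Arrow.mk f ≅ Arrow.mk f') → L f → L f'
  replete_R : ∀ ⦃X Y X' Y' : E⦄ (f : X ⟶ Y) (f' : X' ⟶ Y'),
    (Arrow.mk f ≅ Arrow.mk f') → R f → R f'
  orth : ∀ ⦃A B X Y : E⦄ (u : A ⟶ B) (f : X ⟶ Y), L u → R f → Orth u f
  fac : ∀ ⦃X Y : E⦄ (f : X ⟶ Y), ∃ (Z : E) (l : X ⟶ Z) (r : Z ⟶ Y),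
    L l ∧ R r ∧ l ≫ r = f

/-- `P` is stable under base change: any pullback of a map in `P` is in `P`. -/
def StableUnderBaseChange' (P : MorphismProperty E) : Prop :=
  ∀ ⦃W X Y Z : E⦄ (fst : W ⟶ X) (snd : W ⟶ Y) (f : X ⟶ Z) (g : Y ⟶ Z),
    IsPullback fst snd f g → P f → P snd

end Paper

namespace Paper

universe v₂ u₂
variable {E : Type u} [Category.{v} E]

/-!
Maps inverted by `φ` are left orthogonal to `R_φ`: a diagonal filler is determined by its image
under `φ`, and the cartesian unit square of the right-hand map recovers it from that image.
A map `f : X ⟶ Y` factors through the pullback `Z` of `ιφ f` along `η_Y`. Since `φ` is left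
exact and inverts `η_Y`, it inverts the projection `Z ⟶ ιφ X`, hence also `X ⟶ Z`; and as
`ιφ Z ≅ ιφ X` through that projection, the pullback square is the unit square of `Z ⟶ Y`.
-/

section

variable {E' : Type u₂} [Category.{v₂} E'] {ι : E' ⥤ E} {φ : E ⥤ E'} (adj : φ ⊣ ι)

/-- The class `R_φ`. -/
def cartesianUnitSquare : MorphismProperty E := fun X Y f =>
  IsPullback (adj.unit.app X) f ((φ ⋙ ι).map f) (adj.unit.app Y)

instance : (cartesianUnitSquare adj).RespectsIso := by
  refine .of_respects_arrow_iso _ fun f g e hf => hf.of_iso (Comma.leftIso e)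
    ((φ ⋙ ι).mapIso (Comma.leftIso e)) (Comma.rightIso e) ((φ ⋙ ι).mapIso (Comma.rightIso e))
    (adj.unit.naturality e.hom.left).symm e.hom.w.symm ?_ (adj.unit.naturality e.hom.right).symm
  simp only [Functor.mapIso_hom, ← Functor.map_comp]
  exact congrArg (φ ⋙ ι).map e.hom.w.symm

theorem orth_of_isIso_map_of_cartesianUnitSquare {A B X Y : E} {u : A ⟶ B} {f : X ⟶ Y}
    (hu : IsIso (φ.map u)) (hf : cartesianUnitSquare adj f) : Orth u f := by
  intro x y hxy
  -- any filler `d` has `φ d = (φ u)⁻¹ ≫ φ x`, which pins down `η ≫ ιφ d` and hence `d`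
  set t : B ⟶ ι.obj (φ.obj X) := adj.unit.app B ≫ ι.map (inv (φ.map u) ≫ φ.map x)
  have ht : t ≫ (φ ⋙ ι).map f = y ≫ adj.unit.app Y := by
    have : (inv (φ.map u) ≫ φ.map x) ≫ φ.map f = φ.map y := by
      rw [Category.assoc, ← φ.map_comp, hxy, φ.map_comp, IsIso.inv_hom_id_assoc]
    simp only [t, Functor.comp_map, Category.assoc, ← ι.map_comp, this]
    exact (adj.unit.naturality y).symm
  have hut : u ≫ t = x ≫ adj.unit.app X :=
    calc u ≫ t = adj.unit.app A ≫ ι.map (φ.map u ≫ inv (φ.map u) ≫ φ.map x) := by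
          rw [ι.map_comp, ← Category.assoc, ← Category.assoc]
          exact congrArg (· ≫ _) (adj.unit.naturality u)
      _ = x ≫ adj.unit.app X := by simp
  refine ⟨hf.lift t y ht, ⟨hf.hom_ext ?_ ?_, hf.lift_snd t y ht⟩, fun d ⟨hd, hdf⟩ => ?_⟩
  · rw [Category.assoc, hf.lift_fst, hut]
  · rw [Category.assoc, hf.lift_snd, hxy]
  · have hφd : φ.map d = inv (φ.map u) ≫ φ.map x := by
      rw [IsIso.eq_inv_comp, ← φ.map_comp, hd]
    refine hf.hom_ext ?_ (by rw [hf.lift_snd, hdf])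
    simp only [hf.lift_fst, t, ← hφd, adj.unit_naturality]

variable [ι.Full]

theorem map_unit_app_eq_unit_app (Y : E) :
    ι.map (φ.map (adj.unit.app Y)) = adj.unit.app (ι.obj (φ.obj Y)) := by
  rw [← cancel_mono (ι.map (adj.counit.app (φ.obj Y))), ← ι.map_comp]
  simp

variable [ι.Faithful]

theorem isIso_map_fst_of_isPullback_unit {P X Y : E} {p : P ⟶ X} {r : P ⟶ Y}
    {g : X ⟶ ι.obj (φ.obj Y)} [PreservesLimit (cospan g (adj.unit.app Y)) φ]
    (h : IsPullback p r g (adj.unit.app Y)) : IsIso (φ.map p) :=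
  (φ.map_isPullback h).isIso_fst_of_isIso

theorem cartesianUnitSquare_of_isPullback_unit {P Y : E} {A : E'} {p : P ⟶ ι.obj A} {r : P ⟶ Y}
    {g : ι.obj A ⟶ ι.obj (φ.obj Y)} [PreservesLimit (cospan g (adj.unit.app Y)) φ]
    (h : IsPullback p r g (adj.unit.app Y)) : cartesianUnitSquare adj r := by
  have := isIso_map_fst_of_isPullback_unit adj h
  let e : ι.obj (φ.obj P) ≅ ι.obj A :=
    asIso (ι.map (φ.map p)) ≪≫ (asIso (adj.unit.app (ι.obj A))).symm
  have hp : adj.unit.app P ≫ e.hom = p := by simp [e]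
  have hg : e.hom ≫ g = ι.map (φ.map r) := by
    have hw := congrArg (fun k => ι.map (φ.map k)) h.w
    simp only [Functor.map_comp, map_unit_app_eq_unit_app] at hw
    simp only [e, Iso.trans_hom, Iso.symm_hom, asIso_hom, asIso_inv, Category.assoc]
    rw [← cancel_mono (adj.unit.app (ι.obj (φ.obj Y))), Category.assoc, Category.assoc,
      ← adj.unit_naturality g, IsIso.inv_hom_id_assoc, hw]
  exact h.of_iso (Iso.refl _) e.symm (Iso.refl _) (Iso.refl _)
    (by simp [← hp]) (by simp) (by simp [← hg]) (by simp)

theorem exists_isIso_map_comp_cartesianUnitSquare [HasPullbacks E]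
    [PreservesLimitsOfShape WalkingCospan φ] {X Y : E} (f : X ⟶ Y) :
    ∃ (Z : E) (l : X ⟶ Z) (r : Z ⟶ Y),
      IsIso (φ.map l) ∧ cartesianUnitSquare adj r ∧ l ≫ r = f := by
  have hP := IsPullback.of_hasPullback ((φ ⋙ ι).map f) (adj.unit.app Y)
  have := isIso_map_fst_of_isPullback_unit adj hP
  let l := pullback.lift (adj.unit.app X) f (adj.unit.naturality f).symm
  have hl : φ.map l ≫ φ.map (pullback.fst _ _) = φ.map (adj.unit.app X) := by
    rw [← φ.map_comp, pullback.lift_fst]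
  exact ⟨_, l, _, IsIso.of_isIso_fac_right hl, cartesianUnitSquare_of_isPullback_unit adj hP,
    pullback.lift_snd _ _ _⟩

end

/-- if `φ : E ⥤ E'` is a left-exact reflector onto a reflective full
subcategory (`ι` fully faithful, `φ ⊣ ι`, `φ` preserves finite limits), then the class
`L_φ` of maps inverted by `φ` is the left class of a factorization system whose right
class consists of the maps `f` such that the unit naturality square is cartesian. -/
theorem factorizationSystem_of_lex_reflector [HasFiniteLimits E]
    {E' : Type u₂} [Category.{v₂} E'] (ι : E' ⥤ E) [ι.Full] [ι.Faithful]
    (φ : E ⥤ E') (adj : φ ⊣ ι) [PreservesFiniteLimits φ] :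
    ∃ S : FactorizationSystem E,
      (∀ ⦃X Y : E⦄ (f : X ⟶ Y), S.L f ↔ IsIso (φ.map f)) ∧
      (∀ ⦃X Y : E⦄ (f : X ⟶ Y), S.R f ↔
        IsPullback (adj.unit.app X) f ((φ ⋙ ι).map f) (adj.unit.app Y)) :=
  ⟨{ L := (MorphismProperty.isomorphisms E').inverseImage φ
     R := cartesianUnitSquare adj
     replete_L := fun _ _ _ _ _ _ e => (MorphismProperty.arrow_mk_iso_iff _ e).1
     replete_R := fun _ _ _ _ _ _ e => (MorphismProperty.arrow_mk_iso_iff _ e).1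
     orth := fun _ _ _ _ _ _ hu hf => orth_of_isIso_map_of_cartesianUnitSquare adj hu hf
     fac := fun _ _ f => exists_isIso_map_comp_cartesianUnitSquare adj f },
    fun _ _ _ => Iff.rfl, fun _ _ _ => Iff.rfl⟩

end Paper
end

section
/- Let (L, R) be a factorization system in a category with finite limits, and u : A → B a map. The functor u_♯ : R[A] → R[B] is fully faithful if and only if for every map f : X → A in R, the square formed by L(u∘f) : X → ‖u∘f‖, f, R(u∘f), and u is cartesian. -/
/-!
STATEMENT 9: u_♯ is fully faithful iff the factorization squares of maps f in R over A along u are cartesian.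
-/

open CategoryTheory CategoryTheory.Limits

universe w v u

namespace Paper

universe v₂ u₂
variable {E : Type u} [Category.{v} E]

/-- The right class of a factorization system is stable under base change. -/
lemma R_stable (S : FactorizationSystem E) ⦃W X Y Z : E⦄ (fst : W ⟶ X) (snd : W ⟶ Y)
    (f : X ⟶ Z) (g : Y ⟶ Z) (hP : IsPullback fst snd f g) (hf : S.R f) : S.R snd := by
  obtain ⟨M, e, m, he, hm, hfac⟩ := S.fac snd
  -- fill the square (fst, m ≫ g) against f
  obtain ⟨d, ⟨hd₁, hd₂⟩, -⟩ := S.orth e f he hf fst (m ≫ g)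
    (by rw [hP.w, ← hfac]; simp)
  -- induced map back into the pullback
  have hdm : d ≫ f = m ≫ g := hd₂
  let s : M ⟶ W := hP.lift d m hdm
  have hs₁ : s ≫ fst = d := hP.lift_fst d m hdm
  have hs₂ : s ≫ snd = m := hP.lift_snd d m hdm
  have hes : e ≫ s = 𝟙 W := by
    apply hP.hom_ext
    · rw [Category.assoc, hs₁, hd₁, Category.id_comp]
    · rw [Category.assoc, hs₂, hfac, Category.id_comp]
  have hse : s ≫ e = 𝟙 M := by
    obtain ⟨d', -, huniq⟩ := S.orth e m he hm e m rfl
    have h1 : e ≫ (s ≫ e) = e ∧ (s ≫ e) ≫ m = m := by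
      constructor
      · rw [← Category.assoc, hes, Category.id_comp]
      · rw [Category.assoc, hfac, hs₂]
    have h2 : e ≫ (𝟙 M) = e ∧ (𝟙 M) ≫ m = m := by simp
    rw [huniq _ h1, huniq _ h2]
  have : IsIso e := ⟨s, hes, hse⟩
  exact S.replete_R m snd
    (Arrow.isoMk (asIso e).symm (Iso.refl Y)
      (by simp [← hfac])) hm

/-- The right class of a factorization system is closed under composition. -/
lemma R_comp (S : FactorizationSystem E) ⦃X Y Z : E⦄ {r₁ : X ⟶ Y} {r₂ : Y ⟶ Z}
    (h₁ : S.R r₁) (h₂ : S.R r₂) : S.R (r₁ ≫ r₂) := by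
  obtain ⟨M, e, m, he, hm, hfac⟩ := S.fac (r₁ ≫ r₂)
  obtain ⟨d, ⟨hd₁, hd₂⟩, -⟩ := S.orth e r₂ he h₂ r₁ m (by rw [hfac])
  obtain ⟨s, ⟨hs₁, hs₂⟩, -⟩ := S.orth e r₁ he h₁ (𝟙 X) d (by rw [hd₁]; simp)
  have hse : s ≫ e = 𝟙 M := by
    obtain ⟨d', -, huniq⟩ := S.orth e m he hm e m rfl
    have h1 : e ≫ (s ≫ e) = e ∧ (s ≫ e) ≫ m = m := by
      constructor
      · rw [← Category.assoc, hs₁, Category.id_comp]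
      · rw [Category.assoc, hfac, ← Category.assoc, hs₂, hd₂]
    have h2 : e ≫ (𝟙 M) = e ∧ (𝟙 M) ≫ m = m := by simp
    rw [huniq _ h1, huniq _ h2]
  have : IsIso e := ⟨s, hs₁, hse⟩
  exact S.replete_R m (r₁ ≫ r₂)
    (Arrow.isoMk (asIso e).symm (Iso.refl Z) (by simp [← hfac])) hm

/-- for a factorization system `(L, R)` in a category with finite limits and
a map `u : A ⟶ B`, the functor `u_♯ : R[A] ⥤ R[B]` is fully faithful if and only if for
every `f : X ⟶ A` in `R`, the square formed by `L(u∘f)`, `f`, `R(u∘f)` and `u` is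
cartesian.  Full faithfulness of `u_♯` is expressed pointwise: for objects `(X, f)` and
`(X', f')` of `R[A]` with chosen factorizations `f ≫ u = l ≫ r` and `f' ≫ u = l' ≫ r'`,
every map `ψ : (Z, r) ⟶ (Z', r')` in `E/B` is induced by a unique map
`φ : (X, f) ⟶ (X', f')` in `E/A`. -/
theorem usharp_fullyFaithful_iff [HasFiniteLimits E]
    (S : FactorizationSystem E) {A B : E} (u : A ⟶ B) :
    (∀ ⦃X X' Z Z' : E⦄ (f : X ⟶ A) (f' : X' ⟶ A), S.R f → S.R f' →
      ∀ (l : X ⟶ Z) (r : Z ⟶ B), S.L l → S.R r → l ≫ r = f ≫ u →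
      ∀ (l' : X' ⟶ Z') (r' : Z' ⟶ B), S.L l' → S.R r' → l' ≫ r' = f' ≫ u →
      ∀ (ψ : Z ⟶ Z'), ψ ≫ r' = r →
      ∃! φ : X ⟶ X', φ ≫ f' = f ∧ φ ≫ l' = l ≫ ψ) ↔
    (∀ ⦃X Z : E⦄ (f : X ⟶ A) (l : X ⟶ Z) (r : Z ⟶ B),
      S.R f → S.L l → S.R r → l ≫ r = f ≫ u → IsPullback l f r u) := by
  constructor
  · -- full faithfulness implies squares cartesian
    intro H X Z f l r hf hl hr hcomm
    have hP : IsPullback (pullback.fst r u) (pullback.snd r u) r u :=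
      IsPullback.of_hasPullback r u
    have hsnd : S.R (pullback.snd r u) :=
      R_stable S (pullback.fst r u) (pullback.snd r u) r u hP hr
    obtain ⟨Q, e, m, he, hm, hfac⟩ := S.fac (pullback.fst r u)
    have hfac' : e ≫ (m ≫ r) = pullback.snd r u ≫ u := by
      rw [← Category.assoc, hfac, hP.w]
    obtain ⟨φ, ⟨hφ₁, hφ₂⟩, -⟩ := H (pullback.snd r u) f hsnd hf e (m ≫ r) he
      (R_comp S hm hr) hfac' l r hl hr hcomm m rfl
    have hφl : φ ≫ l = pullback.fst r u := by rw [hφ₂, hfac]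
    let k : X ⟶ pullback r u := pullback.lift l f hcomm
    have hk₁ : k ≫ pullback.fst r u = l := pullback.lift_fst l f hcomm
    have hk₂ : k ≫ pullback.snd r u = f := pullback.lift_snd l f hcomm
    have hφk : φ ≫ k = 𝟙 _ := by
      apply pullback.hom_ext
      · rw [Category.assoc, hk₁, hφl, Category.id_comp]
      · rw [Category.assoc, hk₂, hφ₁, Category.id_comp]
    have hkφ : k ≫ φ = 𝟙 X := by
      obtain ⟨φ₀, -, huniq⟩ := H f f hf hf l r hl hr hcomm l r hl hr hcomm (𝟙 Z)
        (Category.id_comp r)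
      have h1 : (k ≫ φ) ≫ f = f ∧ (k ≫ φ) ≫ l = l ≫ 𝟙 Z := by
        constructor
        · rw [Category.assoc, hφ₁, hk₂]
        · rw [Category.assoc, hφl, hk₁, Category.comp_id]
      have h2 : (𝟙 X) ≫ f = f ∧ (𝟙 X) ≫ l = l ≫ 𝟙 Z := by simp
      rw [huniq _ h1, huniq _ h2]
    have : IsIso k := ⟨φ, hkφ, hφk⟩
    exact IsPullback.of_iso_pullback ⟨hcomm⟩ (asIso k) hk₁ hk₂
  · -- squares cartesian implies full faithfulness
    intro H X X' Z Z' f f' hf hf' l r hl hr hcomm l' r' hl' hr' hcomm' ψ hψ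
    have hP : IsPullback l' f' r' u := H f' l' r' hf' hl' hr' hcomm'
    have hw : (l ≫ ψ) ≫ r' = f ≫ u := by rw [Category.assoc, hψ, hcomm]
    refine ⟨hP.lift (l ≫ ψ) f hw, ⟨hP.lift_snd _ _ _, hP.lift_fst _ _ _⟩, ?_⟩
    intro φ ⟨h₁, h₂⟩
    apply hP.hom_ext
    · rw [hP.lift_fst, h₂]
    · rw [hP.lift_snd, h₁]

end Paper
end

section
/- A factorization system (L, R) in a category E with finite limits is a modality (i.e. L is closed under base change) if and only if L is fiberwise left orthogonal to R, in which case R = L^⋔ and L = ^⋔R. -/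
/-!
STATEMENT 10: (L,R) is a modality iff L is fiberwise left orthogonal to R, in which case R = L^pitchfork and L = pitchfork-R.
-/

open CategoryTheory CategoryTheory.Limits

universe w v u

namespace Paper

universe v₂ u₂
variable {E : Type u} [Category.{v} E]

/-- `u` is fiberwise left orthogonal to `f`: every base change of `u` is left orthogonal
to `f`. -/
def FibOrth {A B X Y : E} (u : A ⟶ B) (f : X ⟶ Y) : Prop :=
  ∀ ⦃A' B' : E⦄ (p : A' ⟶ A) (u' : A' ⟶ B') (q : B' ⟶ B),
    IsPullback p u' u q → Orth u' f

lemma mem_R_of_orth (S : FactorizationSystem E) {X Y : E} (f : X ⟶ Y)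
    (h : ∀ ⦃A B : E⦄ (u : A ⟶ B), S.L u → Orth u f) : S.R f := by
  obtain ⟨Z, l, r, hl, hr, hfac⟩ := S.fac f
  obtain ⟨d, ⟨hd1, hd2⟩, -⟩ := h l hl (𝟙 X) r (by simp [hfac])
  have hdl : d ≫ l = 𝟙 Z := by
    obtain ⟨e, -, huniq⟩ := S.orth l r hl hr l r rfl
    have h1 : d ≫ l = e := huniq (d ≫ l)
      ⟨by rw [← Category.assoc, hd1, Category.id_comp],
       by rw [Category.assoc, hfac, hd2]⟩
    have h2 : 𝟙 Z = e := huniq (𝟙 Z) ⟨by simp, by simp⟩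
    rw [h1, ← h2]
  haveI : IsIso l := ⟨d, hd1, hdl⟩
  exact S.replete_R r f (Arrow.isoMk (asIso l).symm (Iso.refl Y)
    (by simp [← hfac])) hr

lemma mem_L_of_orth (S : FactorizationSystem E) {A B : E} (u : A ⟶ B)
    (h : ∀ ⦃X Y : E⦄ (f : X ⟶ Y), S.R f → Orth u f) : S.L u := by
  obtain ⟨Z, l, r, hl, hr, hfac⟩ := S.fac u
  obtain ⟨d, ⟨hd1, hd2⟩, -⟩ := h r hr l (𝟙 B) (by simp [hfac])
  have hrd : r ≫ d = 𝟙 Z := by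
    obtain ⟨e, -, huniq⟩ := S.orth l r hl hr l r rfl
    have h1 : r ≫ d = e := huniq (r ≫ d)
      ⟨by rw [← Category.assoc, hfac, hd1],
       by rw [Category.assoc, hd2, Category.comp_id]⟩
    have h2 : 𝟙 Z = e := huniq (𝟙 Z) ⟨by simp, by simp⟩
    rw [h1, ← h2]
  haveI : IsIso r := ⟨d, hrd, hd2⟩
  exact S.replete_L l u (Arrow.isoMk (Iso.refl A) (asIso r)
    (by simp [hfac])) hl

/-- a factorization system `(L, R)` in a category with finite limits is a
modality (`L` closed under base change) if and only if `L` is fiberwise left orthogonal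
to `R`, in which case `R = L^⋔` and `L = ^⋔R`. -/
theorem modality_iff_fiberwise_orth [HasFiniteLimits E] (S : FactorizationSystem E) :
    (StableUnderBaseChange' S.L ↔
      ∀ ⦃A B X Y : E⦄ (u : A ⟶ B) (f : X ⟶ Y), S.L u → S.R f → FibOrth u f) ∧
    (StableUnderBaseChange' S.L →
      (∀ ⦃X Y : E⦄ (f : X ⟶ Y), S.R f ↔
        ∀ ⦃A B : E⦄ (u : A ⟶ B), S.L u → FibOrth u f) ∧
      (∀ ⦃A B : E⦄ (u : A ⟶ B), S.L u ↔
        ∀ ⦃X Y : E⦄ (f : X ⟶ Y), S.R f → FibOrth u f)) := by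
  have fwd : StableUnderBaseChange' S.L →
      ∀ ⦃A B X Y : E⦄ (u : A ⟶ B) (f : X ⟶ Y), S.L u → S.R f → FibOrth u f := by
    intro hst A B X Y u f hu hf A' B' p u' q hpb
    exact S.orth u' f (hst p u' u q hpb hu) hf
  have bwd : (∀ ⦃A B X Y : E⦄ (u : A ⟶ B) (f : X ⟶ Y), S.L u → S.R f → FibOrth u f) →
      StableUnderBaseChange' S.L := by
    intro hfib W X Y Z fst snd f g hpb hf
    exact mem_L_of_orth S snd fun X' Y' r hr => hfib f r hf hr fst snd g hpb
  have self_pb : ∀ {A B : E} (u : A ⟶ B), IsPullback (𝟙 A) u u (𝟙 B) := by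
    intro A B u
    exact IsPullback.of_horiz_isIso ⟨by simp⟩
  refine ⟨⟨fwd, bwd⟩, fun hst => ⟨fun {X Y} f => ⟨?_, ?_⟩, fun {A B} u => ⟨?_, ?_⟩⟩⟩
  · intro hf A B u hu
    exact fwd hst u f hu hf
  · intro h
    exact mem_R_of_orth S f fun A B u hu => h u hu (𝟙 A) u (𝟙 B) (self_pb u)
  · intro hu X Y f hf
    exact fwd hst u f hu hf
  · intro h
    exact mem_L_of_orth S u fun X Y f hf => h f hf (𝟙 _) u (𝟙 _) (self_pb u)

end Paper
end

section
/- In a topos E, every saturated class L contains a largest acyclic class A ⊆ L, and a map u belongs to A if and only if every base change of u belongs to L. -/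
/-!
STATEMENT 12: in a topos, every saturated class contains a largest acyclic class, given by the maps all of whose base changes lie in the class.
-/

open CategoryTheory CategoryTheory.Limits

universe w v u

namespace Paper

universe v₂ u₂
variable {E : Type u} [Category.{v} E]

/-- The full subcategory of the arrow category spanned by `P` is closed under (small)
colimits. -/
def ClosedUnderColimitsArrow (P : MorphismProperty E) : Prop :=
  ∀ (J : Type v) [SmallCategory J] (D : J ⥤ Arrow E) (c : Cocone D),
    IsColimit c → (∀ j, P (D.obj j).hom) → P c.pt.hom

/-- `P` is saturated: it contains the isomorphisms, is closed under composition, and is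
closed under colimits in the arrow category. -/
def IsSaturated (P : MorphismProperty E) : Prop :=
  (∀ ⦃X Y : E⦄ (f : X ⟶ Y), IsIso f → P f) ∧
  (∀ ⦃X Y Z : E⦄ (f : X ⟶ Y) (g : Y ⟶ Z), P f → P g → P (f ≫ g)) ∧
  ClosedUnderColimitsArrow P

/-- `P` is acyclic: saturated and closed under base change. -/
def IsAcyclic (P : MorphismProperty E) : Prop :=
  IsSaturated P ∧ StableUnderBaseChange' P

/-!
The largest acyclic class inside `L` is `L.universally`, the maps all of whose base changes lie
in `L`: a class that is stable under base change and contained in `L` is contained in it.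
Isomorphisms and composites are handled by pasting pullback squares. Universality of colimits
enters only in the closure under colimits: let `u'` be a base change, along `τ`, of the apex of a
colimit cocone `c` in `Arrow E` whose arrows are in `L.universally`. Pulling `c` back along `τ`
pulls back colimit cocones of `E` componentwise, so it gives a colimit cocone with apex `u'`; by
the pasting lemma each of its arrows is a base change of an arrow of `c`, hence lies in `L`, and
so does `u'`.
-/

section PullbackOfCocone

variable {J : Type*} [Category J] {C : Type*} [Category C] [HasPullbacks C] {F : J ⥤ C}
  (c : Cocone F) {Y : C} (f : Y ⟶ c.pt)

noncomputable def pullbackDiagram : J ⥤ C where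
  obj j := pullback (c.ι.app j) f
  map φ := pullback.lift (pullback.fst _ _ ≫ F.map φ) (pullback.snd _ _)
    (by simp [pullback.condition])
  map_id _ := by
    apply pullback.hom_ext <;>
      simp only [pullback.lift_fst, pullback.lift_snd, F.map_id, Category.comp_id, Category.id_comp]
  map_comp _ _ := by
    apply pullback.hom_ext <;>
      simp only [pullback.lift_fst, pullback.lift_snd, F.map_comp, Category.assoc,
        pullback.lift_fst_assoc]

noncomputable def pullbackCocone : Cocone (pullbackDiagram c f) where
  pt := Y
  ι := { app _ := pullback.snd _ _
         naturality _ _ _ := (pullback.lift_snd _ _ _).trans (Category.comp_id _).symm }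

noncomputable def pullbackDiagramFst : pullbackDiagram c f ⟶ F where
  app _ := pullback.fst _ _
  naturality _ _ _ := pullback.lift_fst _ _ _

theorem isPullback_pullbackCocone (j : J) :
    IsPullback ((pullbackCocone c f).ι.app j) ((pullbackDiagramFst c f).app j) f (c.ι.app j) :=
  (IsPullback.of_hasPullback _ _).flip

end PullbackOfCocone

instance Arrow.preservesLimitsOfShape_leftFunc {K : Type*} [Category K] [HasLimitsOfShape K E] :
    PreservesLimitsOfShape K (Arrow.leftFunc : Arrow E ⥤ E) where
  preservesLimit := preservesLimit_of_preserves_limit_cone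
    (Comma.coneOfPreservesIsLimit _ (limit.isLimit _) (limit.isLimit _)) (limit.isLimit _)

instance Arrow.preservesLimitsOfShape_rightFunc {K : Type*} [Category K] [HasLimitsOfShape K E] :
    PreservesLimitsOfShape K (Arrow.rightFunc : Arrow E ⥤ E) where
  preservesLimit := preservesLimit_of_preserves_limit_cone
    (Comma.coneOfPreservesIsLimit _ (limit.isLimit _) (limit.isLimit _)) (limit.isLimit _)

section Universality

variable [HasPullbacks E]
  (univ : ∀ {A B : E} (f : A ⟶ B), PreservesColimitsOfSize.{v, v} (Over.pullback f))
  {J : Type v} [SmallCategory J] [HasColimitsOfShape J E]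
include univ

theorem nonempty_isColimit_pullbackCocone {F : J ⥤ E} {c : Cocone F} (hc : IsColimit c) {Y : E}
    (f : Y ⟶ c.pt) : Nonempty (IsColimit (pullbackCocone c f)) := by
  have := univ f
  -- Up to unfolding, `pullbackDiagram c f` is the diagram of legs of `c` in `Over c.pt`
  -- followed by `Over.pullback f` and `Over.forget Y`.
  let d : Cocone (pullbackDiagram c f) :=
    (Over.forget Y).mapCocone ((Over.pullback f).mapCocone c.toOver)
  have hd : IsColimit d := isColimitOfPreserves (Over.forget Y)
    (isColimitOfPreserves (Over.pullback f) (isColimitOfReflects (Over.forget c.pt) hc))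
  let e : pullback (𝟙 c.pt) f ≅ Y := asIso (pullback.snd _ _)
  exact ⟨hd.ofIsoColimit (Cocone.ext e fun _ => pullback.lift_snd _ _ _)⟩

theorem nonempty_isColimit_of_isPullback {F F' : J ⥤ E} {c : Cocone F} (hc : IsColimit c)
    {c' : Cocone F'} {α : F' ⟶ F} {f : c'.pt ⟶ c.pt}
    (h : ∀ j, IsPullback (c'.ι.app j) (α.app j) f (c.ι.app j)) : Nonempty (IsColimit c') := by
  obtain ⟨hU⟩ := nonempty_isColimit_pullbackCocone univ hc f
  let iso j : F'.obj j ≅ (pullbackDiagram c f).obj j :=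
    (h j).isoIsPullback _ _ (isPullback_pullbackCocone c f j)
  have iso_snd j : (iso j).hom ≫ (pullbackCocone c f).ι.app j = c'.ι.app j :=
    IsPullback.isoIsPullback_hom_fst _ _ _ _
  have iso_fst j : (iso j).hom ≫ (pullbackDiagramFst c f).app j = α.app j :=
    IsPullback.isoIsPullback_hom_snd _ _ _ _
  let e : F' ≅ pullbackDiagram c f := NatIso.ofComponents iso fun φ => by
    apply (isPullback_pullbackCocone c f _).hom_ext
    · simp only [Category.assoc, iso_snd, Cocone.w]
      exact c'.w φ
    · simp only [Category.assoc, iso_fst, NatTrans.naturality, reassoc_of% iso_fst]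
  exact ⟨(IsColimit.equivOfNatIsoOfIso e c' (pullbackCocone c f) (Cocone.ext (Iso.refl _) fun j =>
    (Category.comp_id _).trans ((iso j).inv_comp_eq.2 (iso_snd j).symm))).symm hU⟩

theorem Arrow.nonempty_isColimit_of_isPullback {D D' : J ⥤ Arrow E} {c : Cocone D}
    (hc : IsColimit c) {c' : Cocone D'} {α : D' ⟶ D} {τ : c'.pt ⟶ c.pt}
    (h : ∀ j, IsPullback (c'.ι.app j) (α.app j) τ (c.ι.app j)) : Nonempty (IsColimit c') := by
  obtain ⟨hl⟩ := Paper.nonempty_isColimit_of_isPullback univ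
    (isColimitOfPreserves Arrow.leftFunc hc) (c' := Arrow.leftFunc.mapCocone c')
    (α := Functor.whiskerRight α Arrow.leftFunc) (f := τ.left)
    fun j => (h j).map Arrow.leftFunc
  obtain ⟨hr⟩ := Paper.nonempty_isColimit_of_isPullback univ
    (isColimitOfPreserves Arrow.rightFunc hc) (c' := Arrow.rightFunc.mapCocone c')
    (α := Functor.whiskerRight α Arrow.rightFunc) (f := τ.right)
    fun j => (h j).map Arrow.rightFunc
  exact ⟨Comma.fstSndJointlyReflectColimit hl hr⟩

end Universality

theorem Arrow.isPullback_hom_of_isPullback [HasPullbacks E] {W X Y Z : Arrow E} {σ : W ⟶ Z}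
    {β : W ⟶ X} {τ : Z ⟶ Y} {γ : X ⟶ Y} (h : IsPullback σ β τ γ)
    (hτ : IsPullback Z.hom τ.left τ.right Y.hom) : IsPullback W.hom β.left β.right X.hom := by
  have hl : IsPullback σ.left β.left τ.left γ.left := h.map Arrow.leftFunc
  have hr : IsPullback σ.right β.right τ.right γ.right := h.map Arrow.rightFunc
  have outer := hl.paste_horiz hτ
  rw [Arrow.w σ, Arrow.w γ] at outer
  exact outer.of_right (Arrow.w β).symm hr

theorem stableUnderBaseChange'_iff {P : MorphismProperty E} :
    StableUnderBaseChange' P ↔ P.IsStableUnderBaseChange :=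
  ⟨fun h => ⟨fun sq hg => h _ _ _ _ sq hg⟩,
    fun h _ _ _ _ _ _ _ _ sq hf => h.of_isPullback sq hf⟩

theorem le_universally_of_le {P Q : MorphismProperty E} [P.IsStableUnderBaseChange] (h : P ≤ Q) :
    P ≤ Q.universally :=
  MorphismProperty.IsStableUnderBaseChange.universally_eq.ge.trans
    (MorphismProperty.universally_mono h)

theorem ClosedUnderColimitsArrow.universally [HasPullbacks E] [HasColimits E]
    (univ : ∀ {A B : E} (f : A ⟶ B), PreservesColimitsOfSize.{v, v} (Over.pullback f))
    {L : MorphismProperty E} (hL : ClosedUnderColimitsArrow L) :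
    ClosedUnderColimitsArrow L.universally := by
  intro J _ D c hc hD _ _ i₁ i₂ u' hu'
  let τ : Arrow.mk u' ⟶ c.pt := Arrow.homMk i₁ i₂ hu'.w.symm
  obtain ⟨hτ⟩ :=
    Arrow.nonempty_isColimit_of_isPullback univ hc (isPullback_pullbackCocone c τ)
  exact hL J _ (pullbackCocone c τ) hτ fun j =>
    hD j _ _ _ (Arrow.isPullback_hom_of_isPullback (isPullback_pullbackCocone c τ j) hu')

theorem IsSaturated.universally [HasPullbacks E] [HasColimits E]
    (univ : ∀ {A B : E} (f : A ⟶ B), PreservesColimitsOfSize.{v, v} (Over.pullback f))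
    {L : MorphismProperty E} (hL : IsSaturated L) : IsSaturated L.universally := by
  obtain ⟨hiso, hcomp, hcolim⟩ := hL
  have : L.IsStableUnderComposition := ⟨fun f g => hcomp f g⟩
  exact ⟨le_universally_of_le (P := MorphismProperty.isomorphisms E) hiso,
    fun _ _ _ f g => MorphismProperty.comp_mem _ f g, hcolim.universally univ⟩

/-- in a topos (here: a finitely complete cocomplete category with
universal colimits), every saturated class `L` contains a largest acyclic class `A`,
consisting exactly of the maps all of whose base changes belong to `L`. -/
theorem largest_acyclic_class [HasFiniteLimits E] [HasColimits E]
    (univ : ∀ {A B : E} (f : A ⟶ B), PreservesColimitsOfSize.{v, v} (Over.pullback f))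
    (L : MorphismProperty E) (hL : IsSaturated L) :
    ∃ A : MorphismProperty E, IsAcyclic A ∧
      (∀ ⦃X Y : E⦄ (f : X ⟶ Y), A f → L f) ∧
      (∀ A' : MorphismProperty E, IsAcyclic A' →
        (∀ ⦃X Y : E⦄ (f : X ⟶ Y), A' f → L f) →
        ∀ ⦃X Y : E⦄ (f : X ⟶ Y), A' f → A f) ∧
      (∀ ⦃X Y : E⦄ (u : X ⟶ Y), A u ↔
        ∀ ⦃X' Y' : E⦄ (p : X' ⟶ X) (u' : X' ⟶ Y') (q : Y' ⟶ Y),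
          IsPullback p u' u q → L u') := by
  refine ⟨L.universally, ⟨hL.universally univ, stableUnderBaseChange'_iff.2 inferInstance⟩,
    L.universally_le, fun A' hA' hA'L => ?_, fun _ _ _ => ?_⟩
  · have := stableUnderBaseChange'_iff.1 hA'.2
    exact le_universally_of_le hA'L
  · exact ⟨fun hu _ _ p u' q sq => hu p q u' sq.flip,
      fun hu _ _ i₁ i₂ f' sq => hu i₁ f' i₂ sq.flip⟩

end Paper
end

section
/- Let (L, R) be a modality in a category E with finite limits. A map u : A → B belongs to L if and only if the base change functor u* : R[B] → R[A] is fully faithful. -/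
open CategoryTheory CategoryTheory.Limits

universe w v u

/-!
Under the adjunction `Σ_u ⊣ u*`, the action of `u*` on maps `Y ⟶ Y'` corresponds to
precomposition with the counit `Σ_u u*Y ⟶ Y`, whose underlying map is the base change of `u`
along `Y ⟶ B`. If `u ∈ L`, this base change is in `L`, and orthogonality against `Y' ∈ R[B]`
makes precomposition with it bijective. Conversely, factor `u = l ≫ r`; surjectivity for
`Y = 𝟙 B` and `Y' = r` yields a section `s` of `r` with `u ≫ s = l`, and uniqueness of fillers
for `l` against `r` forces `r ≫ s = 𝟙`, so `u` is isomorphic to `l` as an arrow.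
-/

namespace Paper

variable {E : Type u} [Category.{v} E]

lemma surjective_comp_of_retraction {C : Type*} [Category C] {X Y Z W : C} {i : X ⟶ Y}
    {j : Y ⟶ X} (hij : i ≫ j = 𝟙 X) {e : Y ⟶ Z}
    (he : Function.Surjective (fun φ : Z ⟶ W => e ≫ φ)) :
    Function.Surjective (fun φ : Z ⟶ W => (i ≫ e) ≫ φ) := by
  intro g
  obtain ⟨φ, hφ⟩ := he (j ≫ g)
  exact ⟨φ, by simp only [Category.assoc] at hφ ⊢; rw [hφ, reassoc_of% hij]⟩

lemma _root_.CategoryTheory.Adjunction.map_bijective_iff_comp_counit_bijective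
    {C D : Type*} [Category C] [Category D] {F : C ⥤ D} {G : D ⥤ C} (adj : F ⊣ G) (Y Y' : D) :
    Function.Bijective (fun φ : Y ⟶ Y' => G.map φ) ↔
      Function.Bijective (fun φ : Y ⟶ Y' => adj.counit.app Y ≫ φ) := by
  have : (fun φ : Y ⟶ Y' => G.map φ) = adj.homEquiv _ _ ∘ (adj.counit.app Y ≫ ·) := by
    ext φ
    simp [Adjunction.homEquiv_unit]
  rw [this]
  exact Equiv.comp_bijective _ _

lemma Orth.hom_ext {A B X Y : E} {u : A ⟶ B} {f : X ⟶ Y} (h : Orth u f) {d d' : B ⟶ X}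
    (h₁ : u ≫ d = u ≫ d') (h₂ : d ≫ f = d' ≫ f) : d = d' := by
  obtain ⟨_, _, huniq⟩ := h (u ≫ d) (d ≫ f) (by simp)
  exact (huniq d ⟨rfl, rfl⟩).trans (huniq d' ⟨h₁.symm, h₂.symm⟩).symm

lemma Orth.isIso_of_section {A X Y : E} {l : A ⟶ X} {r : X ⟶ Y} (h : Orth l r) {s : Y ⟶ X}
    (hs : s ≫ r = 𝟙 Y) (hls : l ≫ r ≫ s = l) : IsIso r :=
  ⟨s, h.hom_ext (by simpa using hls) (by simp [hs]), hs⟩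

lemma Orth.bijective_comp_over {B : E} {X Y Y' : Over B} (e : X ⟶ Y)
    (h : Orth e.left Y'.hom) : Function.Bijective (fun φ : Y ⟶ Y' => e ≫ φ) := by
  constructor
  · intro φ ψ hφψ
    ext
    exact h.hom_ext (congrArg CommaMorphism.left hφψ) (by simp)
  · intro g
    obtain ⟨d, ⟨hd, hdY⟩, _⟩ := h g.left Y.hom (by simp)
    exact ⟨Over.homMk d hdY, by ext; exact hd⟩

namespace FactorizationSystem

variable (S : FactorizationSystem E)

lemma mem_R_id (X : E) : S.R (𝟙 X) := by
  obtain ⟨Z, l, r, hl, hr, hlr⟩ := S.fac (𝟙 X)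
  have : IsIso r := Orth.isIso_of_section (S.orth l r hl hr) hlr (by simp [reassoc_of% hlr])
  exact S.replete_R r (𝟙 X) (Arrow.isoMk (asIso r) (Iso.refl X)) hr

lemma mem_L_of_surjective_comp_toTerminal {A B : E} (u : A ⟶ B)
    (hu : ∀ Y : Over B, S.R Y.hom → Function.Surjective
      (fun φ : Over.mk (𝟙 B) ⟶ Y => (Over.homMk u : Over.mk u ⟶ Over.mk (𝟙 B)) ≫ φ)) :
    S.L u := by
  obtain ⟨C, l, r, hl, hr, hlr⟩ := S.fac u
  obtain ⟨s, hs⟩ := hu (Over.mk r) hr (Over.homMk l hlr)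
  have hus : u ≫ s.left = l := congrArg CommaMorphism.left hs
  have : IsIso r :=
    Orth.isIso_of_section (S.orth l r hl hr) (Over.w s) (by rw [reassoc_of% hlr, hus])
  exact S.replete_L l u (Arrow.isoMk (Iso.refl A) (asIso r)) hl

end FactorizationSystem

lemma surjective_comp_toTerminal_of_surjective_comp_counit [HasPullbacks E] {A B : E}
    (u : A ⟶ B) {Y : Over B}
    (h : Function.Surjective
      (fun φ : Over.mk (𝟙 B) ⟶ Y => (Over.mapPullbackAdj u).counit.app (Over.mk (𝟙 B)) ≫ φ)) :
    Function.Surjective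
      (fun φ : Over.mk (𝟙 B) ⟶ Y => (Over.homMk u : Over.mk u ⟶ Over.mk (𝟙 B)) ≫ φ) := by
  let i : Over.mk u ⟶ (Over.map u).obj ((Over.pullback u).obj (Over.mk (𝟙 B))) :=
    Over.homMk (pullback.lift u (𝟙 A))
      (by dsimp; exact (pullback.lift_snd_assoc u (𝟙 A) _ u).trans (Category.id_comp u))
  let j : (Over.map u).obj ((Over.pullback u).obj (Over.mk (𝟙 B))) ⟶ Over.mk u :=
    Over.homMk (pullback.snd _ _)
  have hij : i ≫ j = 𝟙 _ := by
    ext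
    exact pullback.lift_snd _ _ _
  have hi : i ≫ (Over.mapPullbackAdj u).counit.app (Over.mk (𝟙 B)) = Over.homMk u := by
    ext
    simp only [i, Over.comp_left, Over.mapPullbackAdj_counit_app, Over.homMk_left]
    exact pullback.lift_fst _ _ _
  rw [← hi]
  exact surjective_comp_of_retraction hij h

/-- `R[B]` is the full subcategory of `Over B` on the objects whose structure map is in `R`, so
full faithfulness of `u*` on it is bijectivity of `(Over.pullback u).map` on hom-sets between
such objects. -/
theorem mem_L_iff_baseChange_fullyFaithful [HasFiniteLimits E]
    (S : FactorizationSystem E) (hmod : StableUnderBaseChange' S.L)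
    {A B : E} (u : A ⟶ B) :
    S.L u ↔ ∀ (Y Y' : Over B), S.R Y.hom → S.R Y'.hom →
      Function.Bijective (fun φ : Y ⟶ Y' => (Over.pullback u).map φ) := by
  simp only [(Over.mapPullbackAdj u).map_bijective_iff_comp_counit_bijective]
  constructor
  · intro hu Y Y' _ hY'
    apply Orth.bijective_comp_over
    simp only [Over.mapPullbackAdj_counit_app, Over.homMk_left]
    exact S.orth _ _ (hmod _ _ u Y.hom (IsPullback.of_hasPullback Y.hom u).flip hu) hY'
  · intro h
    refine S.mem_L_of_surjective_comp_toTerminal u fun Y hY => ?_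
    exact surjective_comp_toTerminal_of_surjective_comp_counit u (h _ Y (S.mem_R_id B) hY).2

end Paper
end

section
/- Let (L, R) be a modality in a category E with finite limits, and u : A → B a map whose diagonal Δ(u) : A → A ×_B A belongs to L. Then the functor u_♯ : R[A] → R[B] is fully faithful. -/
/-!
STATEMENT 14: if the diagonal of u lies in L, then u_♯ : R[A] -> R[B] is fully faithful.
-/

open CategoryTheory CategoryTheory.Limits

universe w v u

namespace Paper

universe v₂ u₂
variable {E : Type u} [Category.{v} E]

/-- L is closed under composition. -/
lemma L_comp (S : FactorizationSystem E) {X Y Z : E} {f : X ⟶ Y} {g : Y ⟶ Z}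
    (hf : S.L f) (hg : S.L g) : S.L (f ≫ g) := by
  obtain ⟨M, l, r, hl, hr, hfac⟩ := S.fac (f ≫ g)
  obtain ⟨d₁, ⟨hd₁₁, hd₁₂⟩, -⟩ := S.orth f r hf hr l g (by rw [hfac])
  obtain ⟨d₂, ⟨hd₂₁, hd₂₂⟩, -⟩ := S.orth g r hg hr d₁ (𝟙 Z) (by rw [hd₁₂, Category.comp_id])
  -- r ≫ d₂ = 𝟙 M via uniqueness in Orth l r
  obtain ⟨e, -, he⟩ := S.orth l r hl hr l r rfl
  have h1 : r ≫ d₂ = 𝟙 M := by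
    have ha : l ≫ (r ≫ d₂) = l ∧ (r ≫ d₂) ≫ r = r := by
      constructor
      · rw [← Category.assoc, hfac, Category.assoc, hd₂₁, hd₁₁]
      · rw [Category.assoc, hd₂₂, Category.comp_id]
    have hb : l ≫ 𝟙 M = l ∧ 𝟙 M ≫ r = r := by simp
    rw [he _ ha, he _ hb]
  have : IsIso r := ⟨d₂, h1, hd₂₂⟩
  exact S.replete_L l (f ≫ g)
    (Arrow.isoMk (Iso.refl X) (asIso r) (by simp [hfac])) hl

/-- Left cancellation for R. -/
lemma R_cancel (S : FactorizationSystem E) {X Y Z : E} {g : X ⟶ Y} {h : Y ⟶ Z}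
    (hh : S.R h) (hgh : S.R (g ≫ h)) : S.R g := by
  obtain ⟨M, l, r, hl, hr, hfac⟩ := S.fac g
  obtain ⟨d, ⟨hd₁, hd₂⟩, -⟩ := S.orth l (g ≫ h) hl hgh (𝟙 X) (r ≫ h)
    (by rw [Category.id_comp, ← Category.assoc, hfac])
  have hdg : d ≫ g = r := by
    obtain ⟨e, -, he⟩ := S.orth l h hl hh g (r ≫ h) (by rw [← Category.assoc, hfac])
    have ha : l ≫ (d ≫ g) = g ∧ (d ≫ g) ≫ h = r ≫ h := by
      constructor
      · rw [← Category.assoc, hd₁, Category.id_comp]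
      · rw [Category.assoc, hd₂]
    have hb : l ≫ r = g ∧ r ≫ h = r ≫ h := ⟨hfac, rfl⟩
    rw [he _ ha, he _ hb]
  have h1 : d ≫ l = 𝟙 M := by
    obtain ⟨e, -, he⟩ := S.orth l r hl hr l r rfl
    have ha : l ≫ (d ≫ l) = l ∧ (d ≫ l) ≫ r = r := by
      constructor
      · rw [← Category.assoc, hd₁, Category.id_comp]
      · rw [Category.assoc, hfac, hdg]
    have hb : l ≫ 𝟙 M = l ∧ 𝟙 M ≫ r = r := by simp
    rw [he _ ha, he _ hb]
  have : IsIso l := ⟨d, hd₁, h1⟩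
  exact S.replete_R r g (Arrow.isoMk (asIso l).symm (Iso.refl Y) (by simp [hfac])) hr

/-- R is stable under base change. -/
lemma R_stable_s14 (S : FactorizationSystem E) : StableUnderBaseChange' S.R := by
  intro W X Y Z fst snd f g hpb hf
  obtain ⟨M, l, r, hl, hr, hfac⟩ := S.fac snd
  obtain ⟨d, ⟨hd₁, hd₂⟩, -⟩ := S.orth l f hl hf fst (r ≫ g)
    (by rw [← Category.assoc, hfac, hpb.w])
  -- lift d and r into the pullback
  have hcomm : d ≫ f = (r : M ⟶ Y) ≫ g := hd₂
  let t : M ⟶ W := hpb.lift d r hcomm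
  have ht₁ : t ≫ fst = d := hpb.lift_fst _ _ _
  have ht₂ : t ≫ snd = r := hpb.lift_snd _ _ _
  have h1 : l ≫ t = 𝟙 W := by
    apply hpb.hom_ext
    · rw [Category.assoc, ht₁, hd₁, Category.id_comp]
    · rw [Category.assoc, ht₂, hfac, Category.id_comp]
  have h2 : t ≫ l = 𝟙 M := by
    obtain ⟨e, -, he⟩ := S.orth l r hl hr l r rfl
    have ha : l ≫ (t ≫ l) = l ∧ (t ≫ l) ≫ r = r := by
      constructor
      · rw [← Category.assoc, h1, Category.id_comp]
      · rw [Category.assoc, hfac, ht₂]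
    have hb : l ≫ 𝟙 M = l ∧ 𝟙 M ≫ r = r := by simp
    rw [he _ ha, he _ hb]
  have : IsIso l := ⟨t, h1, h2⟩
  exact S.replete_R r snd (Arrow.isoMk (asIso l).symm (Iso.refl Y) (by simp [hfac])) hr

/-- A map in both classes is an isomorphism. -/
lemma isIso_of_L_of_R (S : FactorizationSystem E) {X Y : E} {f : X ⟶ Y}
    (hL : S.L f) (hR : S.R f) : IsIso f := by
  obtain ⟨d, ⟨hd₁, hd₂⟩, -⟩ := S.orth f f hL hR (𝟙 X) (𝟙 Y) (by simp)
  exact ⟨d, hd₁, hd₂⟩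

/-- for a modality `(L, R)` in a category with finite limits and a map
`u : A ⟶ B` whose diagonal `Δ(u) : A ⟶ A ×_B A` belongs to `L`, the functor
`u_♯ : R[A] ⥤ R[B]` is fully faithful.  Full faithfulness is expressed pointwise: for
objects `(X, f)` and `(X', f')` of `R[A]` with chosen `(L,R)`-factorizations
`f ≫ u = l ≫ r` and `f' ≫ u = l' ≫ r'`, every map `ψ : (Z, r) ⟶ (Z', r')` in `E/B` is
induced by a unique map `φ : (X, f) ⟶ (X', f')` in `E/A`. -/
theorem usharp_fullyFaithful_of_diagonal [HasFiniteLimits E]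
    (S : FactorizationSystem E) (hmod : StableUnderBaseChange' S.L)
    {A B : E} (u : A ⟶ B) (hdiag : S.L (pullback.diagonal u)) :
    ∀ ⦃X X' Z Z' : E⦄ (f : X ⟶ A) (f' : X' ⟶ A), S.R f → S.R f' →
      ∀ (l : X ⟶ Z) (r : Z ⟶ B), S.L l → S.R r → l ≫ r = f ≫ u →
      ∀ (l' : X' ⟶ Z') (r' : Z' ⟶ B), S.L l' → S.R r' → l' ≫ r' = f' ≫ u →
      ∀ (ψ : Z ⟶ Z'), ψ ≫ r' = r →
      ∃! φ : X ⟶ X', φ ≫ f' = f ∧ φ ≫ l' = l ≫ ψ := by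
  intro X X' Z Z' f f' hf hf' l r hl hr hfac l' r' hl' hr' hfac' ψ hψ
  -- `pr₁ : A ×_B Z' ⟶ A` is a base change of `r'`, hence in `R`
  have hpr₁R : S.R (pullback.fst u r') :=
    R_stable_s14 S (pullback.snd u r') (pullback.fst u r') r' u
      (IsPullback.of_hasPullback u r').flip hr'
  -- the gap map `w = (f', l') : X' ⟶ A ×_B Z'`
  let w : X' ⟶ pullback u r' := pullback.lift f' l' hfac'.symm
  have hw₁ : w ≫ pullback.fst u r' = f' := pullback.lift_fst _ _ _
  have hw₂ : w ≫ pullback.snd u r' = l' := pullback.lift_snd _ _ _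
  -- `w ∈ R` by left cancellation
  have hwR : S.R w := R_cancel S hpr₁R (hw₁ ▸ hf')
  -- the graph `j = (f', 1) : X' ⟶ A ×_B X'`
  let j : X' ⟶ pullback u (f' ≫ u) := pullback.lift f' (𝟙 X') (by simp)
  have hj₁ : j ≫ pullback.fst u (f' ≫ u) = f' := pullback.lift_fst _ _ _
  have hj₂ : j ≫ pullback.snd u (f' ≫ u) = 𝟙 X' := pullback.lift_snd _ _ _
  -- the comparison map `m : A ×_B X' ⟶ A ×_B A`
  let m : pullback u (f' ≫ u) ⟶ pullback u u :=
    pullback.lift (pullback.fst u (f' ≫ u)) (pullback.snd u (f' ≫ u) ≫ f')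
      (by rw [Category.assoc]; exact pullback.condition)
  have hm₁ : m ≫ pullback.fst u u = pullback.fst u (f' ≫ u) := pullback.lift_fst _ _ _
  have hm₂ : m ≫ pullback.snd u u = pullback.snd u (f' ≫ u) ≫ f' := pullback.lift_snd _ _ _
  -- `j` is a base change of the diagonal of `u`, hence in `L`
  have hjpb : IsPullback f' j (pullback.diagonal u) m := by
    have comm : f' ≫ pullback.diagonal u = j ≫ m := by
      apply pullback.hom_ext
      · rw [Category.assoc, Category.assoc, pullback.diagonal_fst, hm₁,
          Category.comp_id, hj₁]
      · rw [Category.assoc, Category.assoc, pullback.diagonal_snd, hm₂,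
          Category.comp_id, ← Category.assoc, hj₂, Category.id_comp]
    refine IsPullback.of_isLimit (PullbackCone.IsLimit.mk comm
      (fun s => s.snd ≫ pullback.snd u (f' ≫ u)) (fun s => ?_) (fun s => ?_)
      (fun s t ht₁ ht₂ => ?_))
    · have h2 := congrArg (fun t => t ≫ pullback.snd u u) s.condition
      simp only [Category.assoc, pullback.diagonal_snd, Category.comp_id, hm₂] at h2
      rw [Category.assoc, ← h2]
    · have h := congrArg (fun t => t ≫ pullback.fst u u) s.condition
      simp only [Category.assoc, pullback.diagonal_fst, Category.comp_id, hm₁] at h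
      have h2 := congrArg (fun t => t ≫ pullback.snd u u) s.condition
      simp only [Category.assoc, pullback.diagonal_snd, Category.comp_id, hm₂] at h2
      apply pullback.hom_ext
      · rw [Category.assoc, Category.assoc, hj₁, ← h2, h]
      · rw [Category.assoc, Category.assoc, hj₂, Category.comp_id]
    · show t = s.snd ≫ pullback.snd u (f' ≫ u)
      rw [← ht₂, Category.assoc, hj₂, Category.comp_id]
  have hjL : S.L j := hmod f' j (pullback.diagonal u) m hjpb hdiag
  -- the map `k = 1 ×_B l' : A ×_B X' ⟶ A ×_B Z'` is a base change of `l'`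
  let k : pullback u (f' ≫ u) ⟶ pullback u r' :=
    pullback.lift (pullback.fst u (f' ≫ u)) (pullback.snd u (f' ≫ u) ≫ l')
      (by rw [pullback.condition, Category.assoc, hfac'])
  have hk₁ : k ≫ pullback.fst u r' = pullback.fst u (f' ≫ u) := pullback.lift_fst _ _ _
  have hk₂ : k ≫ pullback.snd u r' = pullback.snd u (f' ≫ u) ≫ l' := pullback.lift_snd _ _ _
  have hkpb : IsPullback (pullback.snd u (f' ≫ u)) k l' (pullback.snd u r') := by
    refine IsPullback.of_isLimit (PullbackCone.IsLimit.mk hk₂.symm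
      (fun s => pullback.lift (s.snd ≫ pullback.fst u r') s.fst ?_)
      (fun s => pullback.lift_snd _ _ _) (fun s => ?_) (fun s t ht₁ ht₂ => ?_))
    · rw [Category.assoc, pullback.condition, ← Category.assoc, ← s.condition,
        Category.assoc, hfac']
    · apply pullback.hom_ext
      · rw [Category.assoc, hk₁, pullback.lift_fst]
      · rw [Category.assoc, hk₂, ← Category.assoc, pullback.lift_snd, s.condition]
    · apply pullback.hom_ext
      · rw [pullback.lift_fst, ← ht₂, Category.assoc, hk₁]
      · rw [pullback.lift_snd, ht₁]
  have hkL : S.L k := hmod (pullback.snd u (f' ≫ u)) k l' (pullback.snd u r') hkpb hl'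
  -- hence `w = j ≫ k ∈ L`
  have hw_eq : j ≫ k = w := by
    apply pullback.hom_ext
    · rw [Category.assoc, hk₁, hj₁, hw₁]
    · rw [Category.assoc, hk₂, ← Category.assoc, hj₂, Category.id_comp, hw₂]
  have hwL : S.L w := hw_eq ▸ L_comp S hjL hkL
  -- so `w` is an isomorphism
  have hwIso : IsIso w := isIso_of_L_of_R S hwL hwR
  -- the gap map `g = (f, l ≫ ψ) : X ⟶ A ×_B Z'`
  let g : X ⟶ pullback u r' := pullback.lift f (l ≫ ψ)
    (by rw [Category.assoc, hψ, hfac])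
  have hg₁ : g ≫ pullback.fst u r' = f := pullback.lift_fst _ _ _
  have hg₂ : g ≫ pullback.snd u r' = l ≫ ψ := pullback.lift_snd _ _ _
  refine ⟨g ≫ inv w, ⟨?_, ?_⟩, fun φ' hφ' => ?_⟩
  · rw [← hw₁, ← Category.assoc, Category.assoc g (inv w) w, IsIso.inv_hom_id,
      Category.comp_id, hg₁]
  · rw [← hw₂, ← Category.assoc, Category.assoc g (inv w) w, IsIso.inv_hom_id,
      Category.comp_id, hg₂]
  · have hφw : φ' ≫ w = g := by
      apply pullback.hom_ext
      · rw [Category.assoc, hw₁, hg₁, hφ'.1]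
      · rw [Category.assoc, hw₂, hg₂, hφ'.2]
    rw [← hφw, Category.assoc, IsIso.hom_inv_id, Category.comp_id]

end Paper
end

section
/- Let E be a category with finite limits and L a class of maps containing the isomorphisms, closed under composition and under base change. If L is closed under diagonals (Δ(u) ∈ L whenever u ∈ L), then the full subcategory of the arrow category spanned by L is closed under finite limits (in particular under pullbacks of cospans of arrows). -/
/-!
Finite limits are built from a terminal object and pullbacks, and the inclusion of a full
subcategory closed under both preserves them, so these two cases suffice. A terminal arrow is an
isomorphism between terminal objects. For a cospan of arrows `Aᵢ ⟶ Bᵢ` (`i = 1, 0, 2`), the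
induced map `A₁ ×[A₀] A₂ ⟶ B₁ ×[B₀] B₂` factors as `A₁ ×[A₀] A₂ ⟶ A₁ ×[B₀] A₂ ⟶ B₁ ×[B₀] B₂`:
the first map is a base change of the diagonal of `A₀ ⟶ B₀`, the second a composite of base
changes of `A₁ ⟶ B₁` and `A₂ ⟶ B₂`.
-/

open CategoryTheory CategoryTheory.Limits

universe v u

namespace Paper

variable {E : Type u} [Category.{v} E]

/-- The full subcategory of the arrow category spanned by `P` is closed under finite
limits. -/
def ClosedUnderFiniteLimitsArrow (P : MorphismProperty E) : Prop :=
  ∀ (J : Type) [SmallCategory J] [FinCategory J] (D : J ⥤ Arrow E) (c : Cone D),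
    IsLimit c → (∀ j, P (D.obj j).hom) → P c.pt.hom

end Paper

namespace CategoryTheory

variable {C : Type*} [Category* C]

namespace Arrow

variable {J : Type*} [Category* J] [HasLimitsOfShape J C]

instance preservesLimitsOfShape_leftFunc :
    PreservesLimitsOfShape J (Arrow.leftFunc : Arrow C ⥤ C) where
  preservesLimit := preservesLimit_of_preserves_limit_cone
    (Comma.coneOfPreservesIsLimit _ (limit.isLimit _) (limit.isLimit _)) (limit.isLimit _)

instance preservesLimitsOfShape_rightFunc :
    PreservesLimitsOfShape J (Arrow.rightFunc : Arrow C ⥤ C) where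
  preservesLimit := preservesLimit_of_preserves_limit_cone
    (Comma.coneOfPreservesIsLimit _ (limit.isLimit _) (limit.isLimit _)) (limit.isLimit _)

end Arrow

namespace ObjectProperty

lemma isClosedUnderLimitsOfShape_of_terminal_of_pullbacks [HasFiniteLimits C]
    (P : ObjectProperty C) [P.IsClosedUnderIsomorphisms]
    [P.IsClosedUnderLimitsOfShape (Discrete.{0} PEmpty)]
    [P.IsClosedUnderLimitsOfShape WalkingCospan]
    (J : Type) [SmallCategory J] [FinCategory J] :
    P.IsClosedUnderLimitsOfShape J := by
  have : HasFiniteLimits P.FullSubcategory := hasFiniteLimits_of_hasTerminal_and_pullbacks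
  have : PreservesFiniteLimits P.ι := preservesFiniteLimits_of_preservesTerminal_and_pullbacks _
  exact P.isClosedUnderLimitsOfShape_of_preservesLimitsOfShape_ι J

end ObjectProperty

namespace MorphismProperty

variable (P : MorphismProperty C)

def toObjectProperty : ObjectProperty (Arrow C) := fun f => P f.hom

instance [P.RespectsIso] : P.toObjectProperty.IsClosedUnderIsomorphisms where
  of_iso e h := (P.arrow_mk_iso_iff e).1 h

instance [HasTerminal C] [P.ContainsIdentities] [P.RespectsIso] :
    P.toObjectProperty.IsClosedUnderLimitsOfShape (Discrete.{0} PEmpty) where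
  limitsOfShape_le := by
    rintro X ⟨p⟩
    have hX : IsTerminal X := isLimitEquivIsTerminalOfIsEmpty _ _ p.isLimit
    have : IsIso X.hom :=
      isIso_of_isTerminal (hX.isTerminalObj Arrow.leftFunc) (hX.isTerminalObj Arrow.rightFunc) _
    exact P.of_isIso X.hom

variable {P}

lemma of_isPullback_of_isPullback [P.RespectsIso] [HasPullbacks C]
    {A₁ A₂ A₀ A B₁ B₂ B₀ B : C} {a₁ : A ⟶ A₁} {a₂ : A ⟶ A₂} {g₁ : A₁ ⟶ A₀} {g₂ : A₂ ⟶ A₀}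
    {b₁ : B ⟶ B₁} {b₂ : B ⟶ B₂} {h₁ : B₁ ⟶ B₀} {h₂ : B₂ ⟶ B₀}
    (hA : IsPullback a₁ a₂ g₁ g₂) (hB : IsPullback b₁ b₂ h₁ h₂)
    {u₁ : A₁ ⟶ B₁} {u₂ : A₂ ⟶ B₂} {u₀ : A₀ ⟶ B₀}
    (w₁ : g₁ ≫ u₀ = u₁ ≫ h₁) (w₂ : g₂ ≫ u₀ = u₂ ≫ h₂) {φ : A ⟶ B}
    (hφ₁ : φ ≫ b₁ = a₁ ≫ u₁) (hφ₂ : φ ≫ b₂ = a₂ ≫ u₂)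
    (hmap : P (pullback.map g₁ g₂ h₁ h₂ u₁ u₂ u₀ w₁ w₂)) : P φ := by
  have hfac : φ = hA.isoPullback.hom ≫ pullback.map g₁ g₂ h₁ h₂ u₁ u₂ u₀ w₁ w₂ ≫ hB.isoPullback.inv :=
    hB.hom_ext
      (by rw [Category.assoc, Category.assoc, hB.isoPullback_inv_fst, pullback.lift_fst,
        hA.isoPullback_hom_fst_assoc, hφ₁])
      (by rw [Category.assoc, Category.assoc, hB.isoPullback_inv_snd, pullback.lift_snd,
        hA.isoPullback_hom_snd_assoc, hφ₂])
  rwa [hfac, P.cancel_left_of_respectsIso, P.cancel_right_of_respectsIso]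

variable [HasPullbacks C] [P.IsStableUnderBaseChange] [P.IsStableUnderComposition]

lemma pullback_map_of_le_diagonal (hP : P ≤ P.diagonal) {X Y S X' Y' S' : C}
    {f : X ⟶ S} {g : Y ⟶ S} {f' : X' ⟶ S'} {g' : Y' ⟶ S'} {i₁ : X ⟶ X'} {i₂ : Y ⟶ Y'}
    {i₃ : S ⟶ S'} (e₁ : f ≫ i₃ = i₁ ≫ f') (e₂ : g ≫ i₃ = i₂ ≫ g')
    (h₁ : P i₁) (h₂ : P i₂) (h₃ : P i₃) :
    P (pullback.map f g f' g' i₁ i₂ i₃ e₁ e₂) := by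
  have hfac : pullback.map f g (f ≫ i₃) (g ≫ i₃) (𝟙 X) (𝟙 Y) i₃ (by simp) (by simp) ≫
        pullback.map (f ≫ i₃) (g ≫ i₃) f' g' i₁ i₂ (𝟙 S') (by simp [e₁]) (by simp [e₂]) =
      pullback.map f g f' g' i₁ i₂ i₃ e₁ e₂ := by
    rw [pullback.map_comp]
    simp only [Category.id_comp, Category.comp_id]
  rw [← hfac]
  exact P.comp_mem _ _ (P.of_isPullback (pullback_map_diagonal_isPullback f g i₃) (hP _ h₃))
    (P.pullbackMap h₁ h₂ e₁ e₂)

lemma toObjectProperty_pullback (hP : P ≤ P.diagonal) {f₁ f₂ f₀ : Arrow C}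
    (g₁ : f₁ ⟶ f₀) (g₂ : f₂ ⟶ f₀) (h₁ : P f₁.hom) (h₂ : P f₂.hom) (h₀ : P f₀.hom) :
    P (pullback g₁ g₂).hom :=
  of_isPullback_of_isPullback
    (Arrow.leftFunc.map_isPullback (IsPullback.of_hasPullback g₁ g₂))
    (Arrow.rightFunc.map_isPullback (IsPullback.of_hasPullback g₁ g₂))
    (Arrow.leftToRight.naturality g₁) (Arrow.leftToRight.naturality g₂)
    (Arrow.leftToRight.naturality _).symm (Arrow.leftToRight.naturality _).symm
    (pullback_map_of_le_diagonal hP _ _ h₁ h₂ h₀)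

lemma isClosedUnderLimitsOfShape_walkingCospan (hP : P ≤ P.diagonal) :
    P.toObjectProperty.IsClosedUnderLimitsOfShape WalkingCospan :=
  .mk' (by
    rintro _ ⟨F, hF⟩
    exact P.toObjectProperty.prop_of_iso (HasLimit.isoOfNatIso (diagramIsoCospan F)).symm
      (toObjectProperty_pullback hP _ _ (hF _) (hF _) (hF _)))

end MorphismProperty

end CategoryTheory

namespace Paper

variable {E : Type u} [Category.{v} E]

/-- in a category with finite limits, if a class `L` contains the
isomorphisms, is closed under composition and base change, and is closed under
diagonals, then the full subcategory of the arrow category spanned by `L` is closed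
under finite limits. -/
theorem closedUnderFiniteLimits_of_diagonals [HasFiniteLimits E]
    (L : MorphismProperty E)
    (hiso : ∀ ⦃X Y : E⦄ (f : X ⟶ Y), IsIso f → L f)
    (hcomp : ∀ ⦃X Y Z : E⦄ (f : X ⟶ Y) (g : Y ⟶ Z), L f → L g → L (f ≫ g))
    (hbc : StableUnderBaseChange' L)
    (hdiag : ∀ ⦃X Y : E⦄ (u : X ⟶ Y), L u → L (pullback.diagonal u)) :
    ClosedUnderFiniteLimitsArrow L := by
  have : L.IsStableUnderBaseChange := ⟨fun sq hg => hbc _ _ _ _ sq hg⟩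
  have : L.IsStableUnderComposition := ⟨fun f g => hcomp f g⟩
  have : L.ContainsIdentities := ⟨fun X => hiso (𝟙 X) inferInstance⟩
  have := L.isClosedUnderLimitsOfShape_walkingCospan hdiag
  intro J _ _ D c hc hD
  have := L.toObjectProperty.isClosedUnderLimitsOfShape_of_terminal_of_pullbacks J
  exact L.toObjectProperty.prop_of_isLimit hc hD

end Paper
end
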